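/- arXiv:1209.0938 — 2 statements merged into one kernel-verified Lean document; each statement's English description precedes it below -/
import Mathlib

section
/- The map ω ↦ T_ω (sending a permutation to the shape of the recording tableau of any of its reduced words) is a bijection between the set ⋃ₙ Sₙ of all finite permutations and the set of all finite tower diagrams. -/
abbrev Cell : Type := ℕ × ℕ

/-- A tower diagram: a finite set of cells `(i, j)` with `i ≥ 1` that is downward
closed in each column. -/
def IsTowerDiagram (T : Finset Cell) : Prop :=
  ∀ c ∈ T, 1 ≤ c.1 ∧ ∀ j' ≤ c.2, (c.1, j') ∈ T

/-- The flight path of a cell of `T` (F1: direct flight, F2: zigzag flight). -/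
inductive FlightPath (T : Finset Cell) : Cell → Finset Cell → Prop
  | direct (i j : ℕ) (hmem : (i, j) ∈ T)
      (hnone : ∀ c ∈ T, ¬(c.1 < i ∧ c.1 + c.2 + 1 = i + j)) :
      FlightPath T (i, j) {(i, j)}
  | zigzag (i j i' j' : ℕ) (P : Finset Cell)
      (hmem : (i, j) ∈ T) (hmem' : (i', j') ∈ T)
      (hleft : i' < i) (hdiag : i' + j' + 1 = i + j)
      (hclosest : ∀ c ∈ T, c.1 < i → c.1 + c.2 + 1 = i + j → c.1 ≤ i')
      (hup : (i', j' + 1) ∈ T)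
      (hrec : FlightPath T (i', j') P) :
      FlightPath T (i, j) (insert (i, j) (insert (i', j' + 1) P))

/-- `FlightNumber T c f`: `c` has a flight path in `T` whose lexicographically
least cell has coordinate sum `f`. -/
def FlightNumber (T : Finset Cell) (c : Cell) (f : ℕ) : Prop :=
  ∃ P : Finset Cell, FlightPath T c P ∧
    ∃ m ∈ P, m.1 + m.2 = f ∧ ∀ p ∈ P, m.1 < p.1 ∨ (m.1 = p.1 ∧ m.2 ≤ p.2)

/-- A corner cell: it has a flight path and no cell on top of it. -/
def IsCornerCell (T : Finset Cell) (c : Cell) : Prop :=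
  c ∈ T ∧ (c.1, c.2 + 1) ∉ T ∧ ∃ P, FlightPath T c P

/-- `SlideAux T lo α T'` : sliding `α` into the subdiagram of `T` consisting of
the towers in columns `≥ lo` does not terminate and produces `T'`. -/
inductive SlideAux (T : Finset Cell) : ℕ → ℕ → Finset Cell → Prop
  | s1a (lo α : ℕ)
      (h1 : ∀ c ∈ T, lo ≤ c.1 → c.1 + c.2 + 1 ≠ α)
      (h2 : ∀ c ∈ T, lo ≤ c.1 → c.1 + c.2 ≠ α) :
      SlideAux T lo α (insert (α, 0) T)
  | s1c (lo α : ℕ) (T' : Finset Cell)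
      (h1 : ∀ c ∈ T, lo ≤ c.1 → c.1 + c.2 + 1 ≠ α)
      (h2 : (α, 0) ∈ T) (h2' : lo ≤ α) (h3 : (α, 1) ∈ T)
      (hrec : SlideAux T (α + 1) (α + 1) T') :
      SlideAux T lo α T'
  | s2a (lo α i j : ℕ)
      (hmem : (i, j) ∈ T) (hlo : lo ≤ i) (hdiag : i + j + 1 = α)
      (hmin : ∀ c ∈ T, lo ≤ c.1 → c.1 + c.2 + 1 = α → i ≤ c.1)
      (htop : (i, j + 1) ∉ T) :
      SlideAux T lo α (insert (i, j + 1) T)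
  | s2c (lo α i j : ℕ) (T' : Finset Cell)
      (hmem : (i, j) ∈ T) (hlo : lo ≤ i) (hdiag : i + j + 1 = α)
      (hmin : ∀ c ∈ T, lo ≤ c.1 → c.1 + c.2 + 1 = α → i ≤ c.1)
      (h1 : (i, j + 1) ∈ T) (h2 : (i, j + 2) ∈ T)
      (hrec : SlideAux T (i + 1) (α + 1) T') :
      SlideAux T lo α T'

/-- The slide `α ↘ T` does not terminate and produces `T'`. -/
def Slides (T : Finset Cell) (α : ℕ) (T' : Finset Cell) : Prop :=
  SlideAux T 0 α T'

/-- Successive sliding of the letters of a word into the empty diagram. -/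
inductive SRDiagram : List ℕ → Finset Cell → Prop
  | nil : SRDiagram [] ∅
  | snoc {w : List ℕ} {T T' : Finset Cell} {a : ℕ}
      (hw : SRDiagram w T) (ha : Slides T a T') :
      SRDiagram (w ++ [a]) T'

/-- The shape (underlying diagram) of a labelled tableau. -/
def shapeOf (R : Finset (Cell × ℕ)) : Finset Cell := R.image Prod.fst

/-- The recording tableau of the SR algorithm: the cell created at step `k` is
labelled `k`. -/
inductive SRRecord : List ℕ → Finset (Cell × ℕ) → Prop
  | nil : SRRecord [] ∅
  | snoc {w : List ℕ} {R : Finset (Cell × ℕ)} {a : ℕ} {c : Cell}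
      (hw : SRRecord w R) (hc : c ∉ shapeOf R)
      (ha : Slides (shapeOf R) a (insert c (shapeOf R))) :
      SRRecord (w ++ [a]) (insert (c, w.length + 1) R)

/-- The sliding tableau of the SR algorithm: each new cell `(i, j)` is labelled
`i + j`. -/
inductive SRSliding : List ℕ → Finset (Cell × ℕ) → Prop
  | nil : SRSliding [] ∅
  | snoc {w : List ℕ} {S : Finset (Cell × ℕ)} {a : ℕ} {c : Cell}
      (hw : SRSliding w S) (hc : c ∉ shapeOf S)
      (ha : Slides (shapeOf S) a (insert c (shapeOf S))) :
      SRSliding (w ++ [a]) (insert (c, c.1 + c.2) S)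

/-- A tower tableau: a bijective labelling of a tower diagram by `{1, …, n}`. -/
def IsTowerTableau (R : Finset (Cell × ℕ)) : Prop :=
  IsTowerDiagram (shapeOf R) ∧
  (∀ p ∈ R, ∀ q ∈ R, p.1 = q.1 → p = q) ∧
  R.image Prod.snd = Finset.Icc 1 R.card

/-- The subtableau of cells with labels `≤ a`. -/
def labelLE (R : Finset (Cell × ℕ)) (a : ℕ) : Finset (Cell × ℕ) :=
  R.filter fun p => p.2 ≤ a

/-- A standard tower tableau. -/
def IsStandardTowerTableau (R : Finset (Cell × ℕ)) : Prop :=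
  IsTowerTableau R ∧
  ∀ p ∈ R, IsTowerDiagram (shapeOf (labelLE R p.2)) ∧
    IsCornerCell (shapeOf (labelLE R p.2)) p.1

/-- `ReadsTo R w` : `w` is the reading word of the tableau `R`: the `k`-th letter
is the flight number, in `shape (R_{≤ k})`, of the cell labelled `k`. -/
def ReadsTo (R : Finset (Cell × ℕ)) (w : List ℕ) : Prop :=
  w.length = R.card ∧
  ∀ k : Fin w.length, ∀ c : Cell, (c, (k : ℕ) + 1) ∈ R →
    FlightNumber (shapeOf (labelLE R ((k : ℕ) + 1))) c (w.get k)

/-- A word of positive integers. -/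
def IsPosWord (w : List ℕ) : Prop := ∀ a ∈ w, 1 ≤ a

/-- The permutation represented by a word: the product of the corresponding
adjacent transpositions `sᵢ = (i, i+1)`. -/
def permOf (w : List ℕ) : Equiv.Perm ℕ :=
  (w.map fun i => Equiv.swap i (i + 1)).prod

/-- A reduced word: of minimal length among the positive words representing the
same permutation. -/
def IsReducedWord (w : List ℕ) : Prop :=
  IsPosWord w ∧
    ∀ w' : List ℕ, IsPosWord w' → permOf w' = permOf w → w.length ≤ w'.length

/-- A finite permutation: an element of the direct limit `⋃ₙ Sₙ`. -/
def FinitePerm (ω : Equiv.Perm ℕ) : Prop := ∃ w, IsPosWord w ∧ permOf w = ω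

/-- The Coxeter length of a finite permutation. -/
noncomputable def coxLength (ω : Equiv.Perm ℕ) : ℕ :=
  sInf {n | ∃ w : List ℕ, IsPosWord w ∧ permOf w = ω ∧ w.length = n}

/-- The Rothe diagram of a permutation (pairs written `(row, column)`). -/
def RotheDiagram (ω : Equiv.Perm ℕ) : Set (ℕ × ℕ) :=
  {p | 1 ≤ p.1 ∧ 1 ≤ p.2 ∧ p.2 < ω p.1 ∧ p.1 < ω.symm p.2}

/-- Interchanging rows `i` and `i + 1` of a diagram. -/
def rowSwap (i : ℕ) (D : Set (ℕ × ℕ)) : Set (ℕ × ℕ) :=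
  {p | (Equiv.swap i (i + 1) p.1, p.2) ∈ D}

/-- The natural labelling of a tower diagram: labels `1, …, n` go bottom to top
within each tower, taking the towers from right to left. -/
def naturalTableau (T : Finset Cell) : Finset (Cell × ℕ) :=
  T.image fun c => (c, (T.filter fun d => c.1 < d.1).card + c.2 + 1)

/-- A word in natural form: a concatenation of blocks, each a strictly
increasing run of consecutive integers, whose initial terms strictly decrease. -/
def IsNaturalForm (η : List ℕ) : Prop :=
  ∃ blocks : List (List ℕ),
    η = blocks.flatten ∧
    (∀ b ∈ blocks, ∃ s len : ℕ, 1 ≤ len ∧ b = List.range' s len) ∧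
    List.Chain' (· > ·) (blocks.map fun b => b.headI)

/-- `TowerDiagramOf ω T` : `T` is the tower diagram of the permutation `ω`,
i.e. the result of sliding some reduced word of `ω`. -/
def TowerDiagramOf (ω : Equiv.Perm ℕ) (T : Finset Cell) : Prop :=
  ∃ w : List ℕ, IsReducedWord w ∧ permOf w = ω ∧ SRDiagram w T

/-!
Read the towers of a diagram `T` from right to left, each from bottom to top, recording the cell
`(i, j)` as the letter `i + j`; the product of the corresponding adjacent transpositions is a
permutation `towerPerm T`. Sliding `α` into a tower diagram `T` succeeds exactly when `α` is an
ascent of `towerPerm T`, and then it adds one cell and multiplies `towerPerm T` by `s_α` on the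
right. Consequently every positive word that slides completely is reduced (each letter adds one
inversion) and its diagram `T` satisfies `towerPerm T = s_[w]`. The map `towerPerm` is injective,
since the height of the leftmost tower is read off from the permutation, and every finite
permutation is reached by induction on the number of inversions, splitting off a descent.
-/

open Equiv

lemma permOf_append (u v : List ℕ) : permOf (u ++ v) = permOf u * permOf v := by
  simp [permOf]

lemma permOf_cons (a : ℕ) (w : List ℕ) : permOf (a :: w) = swap a (a + 1) * permOf w := by
  simp [permOf]

lemma permOf_singleton (a : ℕ) : permOf [a] = swap a (a + 1) := by
  simp [permOf]

lemma permOf_apply_eq_self {w : List ℕ} {x : ℕ} (h : ∀ a ∈ w, x ≠ a ∧ x ≠ a + 1) :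
    permOf w x = x := by
  induction w with
  | nil => rfl
  | cons a w ih =>
    rw [permOf_cons, Perm.mul_apply, ih fun b hb => h b (List.mem_cons_of_mem a hb)]
    exact swap_apply_of_ne_of_ne (h a List.mem_cons_self).1 (h a List.mem_cons_self).2

lemma permOf_apply_of_lt {w : List ℕ} {lo x : ℕ} (h : ∀ a ∈ w, lo ≤ a) (hx : x < lo) :
    permOf w x = x :=
  permOf_apply_eq_self fun a ha => by have := h a ha; omega

lemma le_permOf_apply {w : List ℕ} {lo x : ℕ} (h : ∀ a ∈ w, lo ≤ a) (hx : lo ≤ x) :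
    lo ≤ permOf w x := by
  by_contra hlt
  have := (permOf w).injective (permOf_apply_of_lt h (not_le.1 hlt))
  omega

lemma permOf_apply_of_le {w : List ℕ} {α x : ℕ} (h : ∀ a ∈ w, a + 1 < α) (hx : α ≤ x) :
    permOf w x = x :=
  permOf_apply_eq_self fun a ha => by have := h a ha; omega

lemma commute_permOf_swap {w : List ℕ} {α : ℕ} (h : ∀ a ∈ w, a + 1 < α) :
    Commute (permOf w) (swap α (α + 1)) := by
  have := mul_swap_eq_swap_mul (permOf w) α (α + 1)
  rwa [permOf_apply_of_le h le_rfl, permOf_apply_of_le h (Nat.le_succ α)] at this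

section Cycle

variable {i h x : ℕ}

lemma permOf_range'_apply_of_lt (hx : x < i) : permOf (List.range' i h) x = x :=
  permOf_apply_of_lt (fun _ ha => (List.mem_range'_1.1 ha).1) hx

lemma permOf_range'_apply_of_gt (hx : i + h < x) : permOf (List.range' i h) x = x :=
  permOf_apply_of_le (fun _ ha => by have := (List.mem_range'_1.1 ha).2; omega) le_rfl

lemma permOf_range'_apply_top : permOf (List.range' i h) (i + h) = i := by
  induction h generalizing i with
  | zero => rfl
  | succ h ih =>
    rw [List.range'_succ, permOf_cons, Perm.mul_apply, show i + (h + 1) = i + 1 + h by omega,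
      ih, swap_apply_right]

lemma permOf_range'_apply_of_mem (h1 : i ≤ x) (h2 : x < i + h) :
    permOf (List.range' i h) x = x + 1 := by
  induction h generalizing i with
  | zero => omega
  | succ h ih =>
    rw [List.range'_succ, permOf_cons, Perm.mul_apply]
    rcases h1.eq_or_lt with rfl | hlt
    · rw [permOf_range'_apply_of_lt (Nat.lt_succ_self _), swap_apply_left]
    · rw [ih hlt (by omega), swap_apply_of_ne_of_ne (by omega) (by omega)]

end Cycle

def inversions (σ : Perm ℕ) : Set (ℕ × ℕ) := {p | p.1 < p.2 ∧ σ p.2 < σ p.1}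

section Inversions

variable {σ : Perm ℕ} {a : ℕ}

lemma inversions_one : inversions 1 = ∅ := by
  ext p
  simp only [inversions, Perm.one_apply, Set.mem_ofPred_eq, Set.mem_empty_iff_false, iff_false]
  omega

lemma swap_lt_swap {x y : ℕ} (hxy : x < y) (hne : ¬(x = a ∧ y = a + 1)) :
    swap a (a + 1) x < swap a (a + 1) y := by
  rw [swap_apply_def, swap_apply_def]
  split_ifs <;> omega

lemma inversions_mul_swap_of_lt (h : σ a < σ (a + 1)) :
    inversions (σ * swap a (a + 1)) =
      insert (a, a + 1) (Prod.map (swap a (a + 1)) (swap a (a + 1)) ⁻¹' inversions σ) := by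
  ext ⟨x, y⟩
  simp only [inversions, Set.mem_ofPred_eq, Set.mem_insert_iff, Set.mem_preimage, Prod.map,
    Prod.mk.injEq, Perm.mul_apply]
  constructor
  · rintro ⟨hxy, hσ⟩
    by_cases hq : x = a ∧ y = a + 1
    · exact Or.inl hq
    · exact Or.inr ⟨swap_lt_swap hxy hq, hσ⟩
  · rintro (⟨rfl, rfl⟩ | ⟨hs, hσ⟩)
    · rw [swap_apply_left, swap_apply_right]
      exact ⟨Nat.lt_succ_self _, h⟩
    · refine ⟨?_, hσ⟩
      by_cases hq : x = a + 1 ∧ y = a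
      · obtain ⟨rfl, rfl⟩ := hq
        rw [swap_apply_left, swap_apply_right] at hσ
        exact absurd h (not_lt.2 hσ.le)
      · have hq' : ¬(swap a (a + 1) x = a ∧ swap a (a + 1) y = a + 1) := by
          rw [swap_apply_def, swap_apply_def]
          split_ifs <;> omega
        simpa only [swap_apply_self] using swap_lt_swap hs hq'

lemma encard_inversions_mul_swap_of_lt (h : σ a < σ (a + 1)) :
    (inversions (σ * swap a (a + 1))).encard = (inversions σ).encard + 1 := by
  have hbij : Function.Bijective (Prod.map (swap a (a + 1)) (swap a (a + 1))) :=
    ⟨Prod.map_injective.2 ⟨(swap a _).injective, (swap a _).injective⟩,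
      Prod.map_surjective.2 ⟨(swap a _).surjective, (swap a _).surjective⟩⟩
  rw [inversions_mul_swap_of_lt h, Set.encard_insert_of_notMem,
    Set.encard_preimage_of_injective_subset_range hbij.1 (by simp [hbij.2.range_eq])]
  simp [inversions]

lemma encard_inversions_permOf_le (w : List ℕ) :
    (inversions (permOf w)).encard ≤ w.length := by
  induction w using List.reverseRecOn with
  | nil => simp [permOf, inversions_one]
  | append_singleton w a ih =>
    rw [permOf_append, permOf_singleton, List.length_append, List.length_singleton,
      Nat.cast_add, Nat.cast_one]
    set σ := permOf w
    rcases lt_or_gt_of_ne (σ.injective.ne (Nat.succ_ne_self a).symm) with hasc | hdesc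
    · rw [encard_inversions_mul_swap_of_lt hasc]
      gcongr
    · have hasc : (σ * swap a (a + 1)) a < (σ * swap a (a + 1)) (a + 1) := by
        simpa using hdesc
      have := encard_inversions_mul_swap_of_lt hasc
      rw [mul_assoc, swap_mul_self, mul_one] at this
      calc (inversions (σ * swap a (a + 1))).encard ≤ (inversions σ).encard := by
            rw [this]; exact le_self_add
        _ ≤ w.length := ih
        _ ≤ w.length + 1 := le_self_add

lemma eq_one_of_inversions_eq_empty (h : inversions σ = ∅) : σ = 1 := by
  classical
  by_contra hne
  have hex : ∃ x, σ x ≠ x := by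
    by_contra! hc
    exact hne (Equiv.ext hc)
  -- the least point `x` moved by `σ` and its preimage form an inversion
  set x := Nat.find hex
  have hx : σ x ≠ x := Nat.find_spec hex
  have hfix : ∀ y < x, σ y = y := fun y hy => not_not.1 (Nat.find_min hex hy)
  have hσx : x < σ x := by
    by_contra! hle
    exact hx (σ.injective (hfix _ (lt_of_le_of_ne hle hx)))
  have hσsymm : x < σ.symm x := by
    by_contra! hle
    have hne : σ.symm x ≠ x := fun he => hx (by rw [← he, apply_symm_apply, he])
    exact hne (by simpa using (hfix _ (lt_of_le_of_ne hle hne)).symm)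
  have hinv : (x, σ.symm x) ∈ inversions σ := ⟨hσsymm, by simpa using hσx⟩
  rwa [h] at hinv

lemma exists_descent_of_mem_inversions {p : ℕ × ℕ} (hp : p ∈ inversions σ) :
    ∃ a, p.1 ≤ a ∧ σ (a + 1) < σ a := by
  by_contra! hasc
  have hmono : ∀ y, p.1 ≤ y → σ p.1 ≤ σ y := fun y hy =>
    Nat.le_induction le_rfl (fun z hz ih => ih.trans (hasc z hz)) y hy
  exact absurd (hmono p.2 hp.1.le) (not_le.2 hp.2)

end Inversions

def colHeight (T : Finset Cell) (i : ℕ) : ℕ := (T.filter fun c => c.1 = i).card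

section Towers

variable {T T' : Finset Cell}

lemma colHeight_insert_of_ne {c : Cell} {i : ℕ} (h : c.1 ≠ i) :
    colHeight (insert c T) i = colHeight T i := by
  rw [colHeight, colHeight, Finset.filter_insert, if_neg h]

lemma colHeight_insert_of_notMem {c : Cell} (h : c ∉ T) :
    colHeight (insert c T) c.1 = colHeight T c.1 + 1 := by
  rw [colHeight, colHeight, Finset.filter_insert, if_pos rfl,
    Finset.card_insert_of_notMem (by simp [h])]

lemma colHeight_eq_zero_of_le {N i : ℕ} (hN : ∀ c ∈ T, c.1 < N) (hi : N ≤ i) :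
    colHeight T i = 0 := by
  rw [colHeight, Finset.card_eq_zero, Finset.filter_eq_empty_iff]
  intro c hc hci
  have := hN c hc
  omega

lemma IsTowerDiagram.mem_iff_lt_colHeight (ht : IsTowerDiagram T) {i j : ℕ} :
    (i, j) ∈ T ↔ j < colHeight T i := by
  constructor
  · intro hij
    have hle : (Finset.range (j + 1)).card ≤ colHeight T i :=
      Finset.card_le_card_of_injOn (fun k => (i, k))
        (fun k hk =>
          Finset.mem_filter.2 ⟨(ht _ hij).2 k (by simpa [Nat.lt_succ_iff] using hk), rfl⟩)
        (fun _ _ _ _ h => (Prod.mk.inj h).2)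
    simpa using hle
  · intro hj
    by_contra hij
    have hsub : T.filter (fun c => c.1 = i) ⊆ (Finset.range j).image fun k => (i, k) := by
      intro c hc
      rw [Finset.mem_filter] at hc
      refine Finset.mem_image.2 ⟨c.2, Finset.mem_range.2 ?_, by rw [← hc.2]⟩
      by_contra! hle
      exact hij (hc.2 ▸ (ht c hc.1).2 j hle)
    have := (Finset.card_le_card hsub).trans Finset.card_image_le
    rw [Finset.card_range] at this
    exact absurd hj (not_lt.2 this)

lemma IsTowerDiagram.eq_of_colHeight_eq (ht : IsTowerDiagram T) (ht' : IsTowerDiagram T')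
    (h : ∀ i, colHeight T i = colHeight T' i) : T = T' := by
  ext ⟨i, j⟩
  rw [ht.mem_iff_lt_colHeight, ht'.mem_iff_lt_colHeight, h]

lemma IsTowerDiagram.insert (ht : IsTowerDiagram T) {i j : ℕ} (hi : 1 ≤ i)
    (hbelow : ∀ j' < j, (i, j') ∈ T) : IsTowerDiagram (insert (i, j) T) := by
  intro c hc
  rcases Finset.mem_insert.1 hc with rfl | hc
  · refine ⟨hi, fun j' hj' => ?_⟩
    rcases hj'.eq_or_lt with rfl | hlt
    · exact Finset.mem_insert_self _ _
    · exact Finset.mem_insert_of_mem (hbelow j' hlt)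
  · exact ⟨(ht c hc).1, fun j' hj' => Finset.mem_insert_of_mem ((ht c hc).2 j' hj')⟩

end Towers

/-- Towers are read from right to left, and the cell `(i, j)` as the letter `i + j`. -/
def colsWord (T : Finset Cell) (lo N : ℕ) : List ℕ :=
  (List.range' lo (N - lo)).reverse.flatMap fun i => List.range' i (colHeight T i)

def colsPerm (T : Finset Cell) (lo N : ℕ) : Perm ℕ := permOf (colsWord T lo N)

section ColsWord

variable {T T' : Finset Cell} {lo N : ℕ}

lemma mem_colsWord {a : ℕ} :
    a ∈ colsWord T lo N ↔ ∃ i, lo ≤ i ∧ i < N ∧ i ≤ a ∧ a < i + colHeight T i := by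
  simp only [colsWord, List.mem_flatMap, List.mem_reverse, List.mem_range'_1]
  constructor
  · rintro ⟨i, hi, ha⟩
    exact ⟨i, hi.1, by omega, ha⟩
  · rintro ⟨i, h1, h2, ha⟩
    exact ⟨i, ⟨h1, by omega⟩, ha⟩

lemma le_of_mem_colsWord {a : ℕ} (ha : a ∈ colsWord T lo N) : lo ≤ a := by
  obtain ⟨i, hi, -, hia, -⟩ := mem_colsWord.1 ha
  exact hi.trans hia

lemma colsWord_append {m : ℕ} (hlo : lo ≤ m) (hN : m ≤ N) :
    colsWord T m N ++ colsWord T lo m = colsWord T lo N := by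
  have hsplit : List.range' lo (N - lo) = List.range' lo (m - lo) ++ List.range' m (N - m) := by
    have := List.range'_append (s := lo) (m := m - lo) (n := N - m) (step := 1)
    rwa [Nat.one_mul, Nat.add_sub_cancel' hlo, show m - lo + (N - m) = N - lo by omega,
      eq_comm] at this
  rw [colsWord, colsWord, colsWord, hsplit, List.reverse_append, List.flatMap_append]

lemma colsWord_succ_self (β : ℕ) : colsWord T β (β + 1) = List.range' β (colHeight T β) := by
  simp [colsWord]

lemma colsWord_split {β : ℕ} (hlo : lo ≤ β) (hβ : β < N) :
    colsWord T lo N =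
      colsWord T (β + 1) N ++ List.range' β (colHeight T β) ++ colsWord T lo β := by
  rw [← colsWord_succ_self, colsWord_append (Nat.le_succ β) hβ, colsWord_append hlo hβ.le]

lemma colsWord_congr (h : ∀ i, lo ≤ i → i < N → colHeight T i = colHeight T' i) :
    colsWord T lo N = colsWord T' lo N :=
  List.flatMap_congr fun i hi => by
    rw [List.mem_reverse, List.mem_range'_1] at hi
    rw [h i hi.1 (by omega)]

lemma colsWord_of_le {N' : ℕ} (hN : ∀ c ∈ T, c.1 < N) (hNN' : N ≤ N') :
    colsWord T lo N' = colsWord T lo N := by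
  have hnil : ∀ m, N ≤ m → colsWord T m N' = [] := fun m hm =>
    List.flatMap_eq_nil_iff.2 fun i hi => by
      rw [List.mem_reverse, List.mem_range'_1] at hi
      rw [List.range'_eq_nil_iff, colHeight_eq_zero_of_le hN (by omega)]
  rcases le_total lo N with hlo | hlo
  · rw [← colsWord_append hlo hNN', hnil N le_rfl, List.nil_append]
  · rw [hnil lo hlo, colsWord, Nat.sub_eq_zero_of_le hlo]
    rfl

lemma colsPerm_split {β : ℕ} (hlo : lo ≤ β) (hβ : β < N) :
    colsPerm T lo N =
      colsPerm T (β + 1) N * permOf (List.range' β (colHeight T β)) * colsPerm T lo β := by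
  rw [colsPerm, colsWord_split hlo hβ, permOf_append, permOf_append]
  rfl

lemma colsPerm_apply_of_lt {x : ℕ} (hx : x < lo) : colsPerm T lo N x = x :=
  permOf_apply_of_lt (fun _ => le_of_mem_colsWord) hx

lemma le_colsPerm_apply {x : ℕ} (hx : lo ≤ x) : lo ≤ colsPerm T lo N x :=
  le_permOf_apply (fun _ => le_of_mem_colsWord) hx

end ColsWord

/-- Column `β` is where the slide of `α` into the towers of `T` in columns `≥ lo` takes place:
`β = α` if none of these towers meets the diagonal `x + y = α - 1`, and otherwise `β` is the
column of the leftmost cell on it. -/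
structure IsSlideColumn (T : Finset Cell) (lo α β : ℕ) : Prop where
  lo_le : lo ≤ β
  le : β ≤ α
  not_diag : ∀ c ∈ T, lo ≤ c.1 → c.1 < β → c.1 + c.2 + 1 ≠ α

namespace IsSlideColumn

variable {T : Finset Cell} {lo α β N : ℕ}

lemma add_one_lt_of_mem_colsWord (hβ : IsSlideColumn T lo α β) (ht : IsTowerDiagram T) {a : ℕ}
    (ha : a ∈ colsWord T lo β) : a + 1 < α := by
  obtain ⟨i, hlo, hiβ, hia, hai⟩ := mem_colsWord.1 ha
  have hβα := hβ.le
  by_contra! hle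
  exact hβ.not_diag _ (ht.mem_iff_lt_colHeight.2 (by omega : α - 1 - i < colHeight T i)) hlo hiβ
    (by dsimp only; omega)

lemma colsPerm_apply (hβ : IsSlideColumn T lo α β) (ht : IsTowerDiagram T) (hβN : β < N)
    {x : ℕ} (hx : α ≤ x) :
    colsPerm T lo N x =
      colsPerm T (β + 1) N (permOf (List.range' β (colHeight T β)) x) := by
  rw [colsPerm_split hβ.lo_le hβN, Perm.mul_apply, Perm.mul_apply]
  congr 2
  exact permOf_apply_of_le (fun _ => hβ.add_one_lt_of_mem_colsWord ht) hx

lemma colsPerm_mul_swap (hβ : IsSlideColumn T lo α β) (ht : IsTowerDiagram T) (hβN : β < N) :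
    colsPerm T lo N * swap α (α + 1) =
      colsPerm T (β + 1) N * (permOf (List.range' β (colHeight T β)) * swap α (α + 1)) *
        colsPerm T lo β := by
  have hcomm : Commute (colsPerm T lo β) (swap α (α + 1)) :=
    commute_permOf_swap fun _ => hβ.add_one_lt_of_mem_colsWord ht
  rw [colsPerm_split hβ.lo_le hβN, mul_assoc, hcomm.eq, mul_assoc, mul_assoc, mul_assoc]

/-- The slide ends by putting a cell on top of tower `β`. -/
lemma colsPerm_insert_top (hβ : IsSlideColumn T lo α β) (ht : IsTowerDiagram T) (hβN : β < N)
    (hα : β + colHeight T β = α) :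
    colsPerm (insert (β, colHeight T β) T) lo N = colsPerm T lo N * swap α (α + 1) ∧
      colsPerm T lo N α < colsPerm T lo N (α + 1) := by
  have hnew : (β, colHeight T β) ∉ T := fun h => lt_irrefl _ (ht.mem_iff_lt_colHeight.1 h)
  have hsame : ∀ i ≠ β, colHeight (insert (β, colHeight T β) T) i = colHeight T i :=
    fun i hi => colHeight_insert_of_ne hi.symm
  constructor
  · rw [colsPerm_split hβ.lo_le hβN, colsPerm, colsPerm,
      colsWord_congr fun i hi _ => hsame i (by omega),
      colsWord_congr (lo := lo) (N := β) fun i _ hi => hsame i (by omega),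
      colHeight_insert_of_notMem hnew, hβ.colsPerm_mul_swap ht hβN, List.range'_1_concat,
      permOf_append, permOf_singleton, hα]
    rfl
  · rw [hβ.colsPerm_apply ht hβN le_rfl, hβ.colsPerm_apply ht hβN (Nat.le_add_right α 1),
      ← hα,
      permOf_range'_apply_top, permOf_range'_apply_of_gt (Nat.lt_succ_self _),
      colsPerm_apply_of_lt (Nat.lt_succ_self β)]
    exact le_colsPerm_apply (by omega)

/-- The slide passes through tower `β` and goes on with `α + 1` to the right of it. -/
lemma colsPerm_insert_of_lt (hβ : IsSlideColumn T lo α β) (ht : IsTowerDiagram T)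
    (hβN : β < N) (hα : α + 1 < β + colHeight T β) {c : Cell} (hc : β < c.1)
    (hrec : colsPerm (insert c T) (β + 1) N = colsPerm T (β + 1) N * swap (α + 1) (α + 1 + 1)) :
    colsPerm (insert c T) lo N = colsPerm T lo N * swap α (α + 1) := by
  have hβα := hβ.le
  have hX := mul_swap_eq_swap_mul (permOf (List.range' β (colHeight T β))) α (α + 1)
  rw [permOf_range'_apply_of_mem hβ.le (by omega), permOf_range'_apply_of_mem (by omega) hα]
    at hX
  rw [colsPerm_split hβ.lo_le hβN, hrec, colHeight_insert_of_ne hc.ne', colsPerm, colsPerm,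
    colsWord_congr (lo := lo) (N := β) fun i _ hi => colHeight_insert_of_ne (by omega),
    hβ.colsPerm_mul_swap ht hβN, hX, mul_assoc (colsPerm T (β + 1) N)]
  rfl

lemma colsPerm_lt_iff (hβ : IsSlideColumn T lo α β) (ht : IsTowerDiagram T) (hβN : β < N)
    (hα : α + 1 < β + colHeight T β) :
    colsPerm T lo N α < colsPerm T lo N (α + 1) ↔
      colsPerm T (β + 1) N (α + 1) < colsPerm T (β + 1) N (α + 1 + 1) := by
  have hβα := hβ.le
  rw [hβ.colsPerm_apply ht hβN le_rfl, hβ.colsPerm_apply ht hβN (Nat.le_add_right α 1),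
    permOf_range'_apply_of_mem hβ.le (by omega), permOf_range'_apply_of_mem (by omega) hα]

/-- When tower `β` is exactly one cell too high, `α` is a descent: the slide would terminate. -/
lemma colsPerm_succ_lt (hβ : IsSlideColumn T lo α β) (ht : IsTowerDiagram T) (hβN : β < N)
    (hα : α + 1 = β + colHeight T β) :
    colsPerm T lo N (α + 1) < colsPerm T lo N α := by
  have hβα := hβ.le
  rw [hβ.colsPerm_apply ht hβN le_rfl, hβ.colsPerm_apply ht hβN (Nat.le_add_right α 1), hα,
    permOf_range'_apply_top, permOf_range'_apply_of_mem hβ.le (by omega),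
    colsPerm_apply_of_lt (Nat.lt_succ_self β)]
  exact le_colsPerm_apply (by omega)

end IsSlideColumn

namespace SlideAux

variable {T T' : Finset Cell} {lo α : ℕ}

lemma exists_eq_insert (h : SlideAux T lo α T') (hlo : lo ≤ α) :
    ∃ c, lo ≤ c.1 ∧ T' = insert c T := by
  induction h with
  | s1a => exact ⟨_, hlo, rfl⟩
  | s1c lo α T' _ _ hlo' _ _ ih =>
    obtain ⟨c, hc, rfl⟩ := ih le_rfl
    exact ⟨c, by omega, rfl⟩
  | s2a lo α i j _ hi => exact ⟨_, hi, rfl⟩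
  | s2c lo α i j T' _ hi hd _ _ _ _ ih =>
    obtain ⟨c, hc, rfl⟩ := ih (by omega)
    exact ⟨c, by omega, rfl⟩

lemma isTowerDiagram (h : SlideAux T lo α T') (ht : IsTowerDiagram T) (hα : 1 ≤ α) :
    IsTowerDiagram T' := by
  induction h with
  | s1a => exact ht.insert hα fun _ h => absurd h (Nat.not_lt_zero _)
  | s1c _ _ _ _ _ _ _ _ ih => exact ih (Nat.le_add_left 1 _)
  | s2a _ _ i j hmem =>
    exact ht.insert (ht _ hmem).1 fun j' hj' => (ht _ hmem).2 j' (Nat.lt_succ_iff.1 hj')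
  | s2c _ _ _ _ _ _ _ _ _ _ _ _ ih => exact ih (Nat.le_add_left 1 _)

lemma colsPerm_eq (h : SlideAux T lo α T') (ht : IsTowerDiagram T) (hlo : lo ≤ α) {N : ℕ}
    (hN : ∀ c ∈ T', c.1 < N) :
    colsPerm T' lo N = colsPerm T lo N * swap α (α + 1) ∧
      colsPerm T lo N α < colsPerm T lo N (α + 1) := by
  induction h with
  | s1a lo α h1 h2 =>
    have hβ : IsSlideColumn T lo α α := ⟨hlo, le_rfl, fun c hc hlo' _ => h1 c hc hlo'⟩
    have h0 : colHeight T α = 0 := by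
      by_contra hne
      exact h2 _ (ht.mem_iff_lt_colHeight.2 (Nat.pos_of_ne_zero hne)) hlo rfl
    have := hβ.colsPerm_insert_top ht (hN _ (Finset.mem_insert_self _ _)) (by rw [h0]; rfl)
    rwa [h0] at this
  | s1c lo α T' h1 h0 _ h1' hrec ih =>
    have hβ : IsSlideColumn T lo α α := ⟨hlo, le_rfl, fun c hc hlo' _ => h1 c hc hlo'⟩
    obtain ⟨c, hc, rfl⟩ := hrec.exists_eq_insert le_rfl
    have hαN : α < N := hN _ (Finset.mem_insert_of_mem h0)
    have hh : α + 1 < α + colHeight T α := by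
      have := ht.mem_iff_lt_colHeight.1 h1'
      omega
    obtain ⟨hperm, hasc⟩ := ih le_rfl hN
    exact ⟨hβ.colsPerm_insert_of_lt ht hαN hh hc hperm,
      (hβ.colsPerm_lt_iff ht hαN hh).2 hasc⟩
  | s2a lo α i j hmem hi hd hmin htop =>
    have hβ : IsSlideColumn T lo α i :=
      ⟨hi, by omega, fun c hc hlo' hci hcd => by have := hmin c hc hlo' hcd; omega⟩
    have hh : colHeight T i = j + 1 := by
      have := ht.mem_iff_lt_colHeight.1 hmem
      have := mt ht.mem_iff_lt_colHeight.2 htop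
      omega
    have := hβ.colsPerm_insert_top ht (hN _ (Finset.mem_insert_self _ _)) (by omega)
    rwa [hh] at this
  | s2c lo α i j T' hmem hi hd hmin _ h2 hrec ih =>
    have hβ : IsSlideColumn T lo α i :=
      ⟨hi, by omega, fun c hc hlo' hci hcd => by have := hmin c hc hlo' hcd; omega⟩
    obtain ⟨c, hc, rfl⟩ := hrec.exists_eq_insert (by omega)
    have hiN : i < N := hN _ (Finset.mem_insert_of_mem hmem)
    have hh : α + 1 < i + colHeight T i := by
      have := ht.mem_iff_lt_colHeight.1 h2
      omega
    obtain ⟨hperm, hasc⟩ := ih (by omega) hN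
    exact ⟨hβ.colsPerm_insert_of_lt ht hiN hh hc hperm, (hβ.colsPerm_lt_iff ht hiN hh).2 hasc⟩

end SlideAux

lemma exists_slideAux {T : Finset Cell} (ht : IsTowerDiagram T) {lo α N : ℕ} (hlo : lo ≤ α)
    (hN : ∀ c ∈ T, c.1 < N) (hasc : colsPerm T lo N α < colsPerm T lo N (α + 1)) :
    ∃ T', SlideAux T lo α T' := by
  classical
  by_cases hd : ∃ i j, (i, j) ∈ T ∧ lo ≤ i ∧ i + j + 1 = α
  · obtain ⟨j, hmem, hi, hdiag⟩ := Nat.find_spec hd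
    set i := Nat.find hd
    have hmin : ∀ c ∈ T, lo ≤ c.1 → c.1 + c.2 + 1 = α → i ≤ c.1 :=
      fun c hc hlo' hcd => Nat.find_min' hd ⟨c.2, hc, hlo', hcd⟩
    have hβ : IsSlideColumn T lo α i :=
      ⟨hi, by omega, fun c hc hlo' hci hcd => by have := hmin c hc hlo' hcd; omega⟩
    have hiN : i < N := hN _ hmem
    have hh := ht.mem_iff_lt_colHeight.1 hmem
    rcases (by omega : colHeight T i = j + 1 ∨ colHeight T i = j + 2 ∨ j + 3 ≤ colHeight T i)
      with hh | hh | hh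
    · exact ⟨_, .s2a lo α i j hmem hi hdiag hmin (by rw [ht.mem_iff_lt_colHeight]; omega)⟩
    · exact absurd hasc (not_lt.2 (hβ.colsPerm_succ_lt ht hiN (by omega)).le)
    · obtain ⟨T', hT'⟩ := exists_slideAux ht (by omega : i + 1 ≤ α + 1) hN
        ((hβ.colsPerm_lt_iff ht hiN (by omega)).1 hasc)
      exact ⟨T', .s2c lo α i j T' hmem hi hdiag hmin (ht.mem_iff_lt_colHeight.2 (by omega))
        (ht.mem_iff_lt_colHeight.2 (by omega)) hT'⟩
  · push Not at hd
    have h1 : ∀ c ∈ T, lo ≤ c.1 → c.1 + c.2 + 1 ≠ α :=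
      fun c hc hlo' => hd c.1 c.2 hc hlo'
    have hβ : IsSlideColumn T lo α α := ⟨hlo, le_rfl, fun c hc hlo' _ => h1 c hc hlo'⟩
    rcases (by omega : colHeight T α = 0 ∨ colHeight T α = 1 ∨ 2 ≤ colHeight T α)
      with hh | hh | hh
    · refine ⟨_, .s1a lo α h1 fun c hc hlo' hcd => ?_⟩
      -- a cell on the diagonal `x + y = α` is `(α, 0)` or sits on one on `x + y = α - 1`
      rcases Nat.eq_zero_or_pos c.2 with h0 | hpos
      · have := ht.mem_iff_lt_colHeight.1 (show (c.1, c.2) ∈ T from hc)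
        rw [show c.1 = α by omega] at this
        omega
      · exact h1 _ ((ht c hc).2 (c.2 - 1) (Nat.sub_le _ _)) hlo' (by dsimp only; omega)
    · have hαN : α < N := hN _ (ht.mem_iff_lt_colHeight.2 (by omega : 0 < colHeight T α))
      exact absurd hasc (not_lt.2 (hβ.colsPerm_succ_lt ht hαN (by omega)).le)
    · have hαN : α < N := hN _ (ht.mem_iff_lt_colHeight.2 (by omega : 0 < colHeight T α))
      obtain ⟨T', hT'⟩ := exists_slideAux ht le_rfl hN
        ((hβ.colsPerm_lt_iff ht hαN (by omega)).1 hasc)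
      exact ⟨T', .s1c lo α T' h1 (ht.mem_iff_lt_colHeight.2 (by omega)) hlo
        (ht.mem_iff_lt_colHeight.2 (by omega)) hT'⟩
termination_by N - lo

def colBound (T : Finset Cell) : ℕ := T.sup Prod.fst + 1

def naturalWord (T : Finset Cell) : List ℕ := colsWord T 0 (colBound T)

def towerPerm (T : Finset Cell) : Perm ℕ := permOf (naturalWord T)

section TowerPerm

variable {T T' : Finset Cell}

lemma lt_colBound {c : Cell} (hc : c ∈ T) : c.1 < colBound T :=
  Nat.lt_succ_of_le (Finset.le_sup (f := Prod.fst) hc)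

lemma towerPerm_empty : towerPerm ∅ = 1 := by
  simp [towerPerm, naturalWord, colsWord, colBound, colHeight, permOf]

lemma colsPerm_eq_towerPerm {N : ℕ} (hN : ∀ c ∈ T, c.1 < N) :
    colsPerm T 0 N = towerPerm T := by
  rcases le_total N (colBound T) with h | h
  · rw [colsPerm, towerPerm, naturalWord, colsWord_of_le hN h]
  · rw [colsPerm, towerPerm, naturalWord, colsWord_of_le (fun _ => lt_colBound) h]

lemma Slides.towerPerm_eq {α : ℕ} (h : Slides T α T') (ht : IsTowerDiagram T) (hα : 1 ≤ α) :
    IsTowerDiagram T' ∧ towerPerm T' = towerPerm T * swap α (α + 1) ∧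
      towerPerm T α < towerPerm T (α + 1) := by
  obtain ⟨c, -, rfl⟩ := SlideAux.exists_eq_insert h (Nat.zero_le α)
  have hN : ∀ d ∈ insert c T, d.1 < colBound (insert c T) := fun _ => lt_colBound
  obtain ⟨hperm, hasc⟩ := SlideAux.colsPerm_eq h ht (Nat.zero_le α) hN
  have hT := colsPerm_eq_towerPerm fun d hd => hN d (Finset.mem_insert_of_mem hd)
  rw [colsPerm_eq_towerPerm hN, hT] at hperm
  rw [hT] at hasc
  exact ⟨SlideAux.isTowerDiagram h ht hα, hperm, hasc⟩

lemma exists_slides_of_lt (ht : IsTowerDiagram T) {α : ℕ}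
    (hasc : towerPerm T α < towerPerm T (α + 1)) : ∃ T', Slides T α T' :=
  exists_slideAux ht (Nat.zero_le α) (fun _ => lt_colBound)
    (by rwa [colsPerm_eq_towerPerm fun _ => lt_colBound])

lemma SRDiagram.towerPerm_eq {w : List ℕ} (h : SRDiagram w T) (hw : IsPosWord w) :
    IsTowerDiagram T ∧ towerPerm T = permOf w ∧ (inversions (permOf w)).encard = w.length := by
  induction h with
  | nil =>
    exact ⟨fun c hc => absurd hc (Finset.notMem_empty c), towerPerm_empty,
      by simp [permOf, inversions_one]⟩
  | @snoc w T T' a _ ha ih =>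
    obtain ⟨ht, hperm, hinv⟩ := ih fun b hb => hw b (List.mem_append_left _ hb)
    obtain ⟨ht', hperm', hasc⟩ := ha.towerPerm_eq ht (hw a (by simp))
    rw [hperm] at hperm' hasc
    rw [permOf_append, permOf_singleton, encard_inversions_mul_swap_of_lt hasc, hinv,
      List.length_append, List.length_singleton, Nat.cast_add, Nat.cast_one]
    exact ⟨ht', hperm', rfl⟩

lemma SRDiagram.isReducedWord {w : List ℕ} (h : SRDiagram w T) (hw : IsPosWord w) :
    IsReducedWord w := by
  refine ⟨hw, fun w' _ hperm => ?_⟩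
  have := encard_inversions_permOf_le w'
  rw [hperm, (h.towerPerm_eq hw).2.2] at this
  exact_mod_cast this

end TowerPerm

lemma slides_insert_of_forall_le {S : Finset Cell} {i k : ℕ} (hS : ∀ c ∈ S, i ≤ c.1)
    (hcol : ∀ j, (i, j) ∈ S ↔ j < k) : Slides S (i + k) (insert (i, k) S) := by
  cases k with
  | zero =>
    refine .s1a 0 i (fun c hc _ => ?_) (fun c hc _ hcd => ?_)
    · have := hS c hc
      omega
    · have hc0 : c = (i, 0) := Prod.ext (by have := hS c hc; omega) (by have := hS c hc; omega)
      exact absurd ((hcol 0).1 (hc0 ▸ hc)) (lt_irrefl 0)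
  | succ j =>
    exact .s2a 0 _ i j ((hcol j).2 (Nat.lt_succ_self j)) (Nat.zero_le i) rfl
      (fun c hc _ _ => hS c hc) fun h => lt_irrefl _ ((hcol (j + 1)).1 h)

lemma SRDiagram.append_range' {w : List ℕ} {S : Finset Cell} {i : ℕ} (h : SRDiagram w S)
    (hS : ∀ c ∈ S, i < c.1) (k : ℕ) :
    SRDiagram (w ++ List.range' i k) (S ∪ (Finset.range k).image fun j => (i, j)) := by
  induction k with
  | zero => simpa using h
  | succ k ih =>
    rw [List.range'_1_concat, ← List.append_assoc, Finset.range_add_one, Finset.image_insert,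
      Finset.union_insert]
    refine ih.snoc (slides_insert_of_forall_le (fun c hc => ?_) fun j => ?_)
    · rcases Finset.mem_union.1 hc with hc | hc
      · exact (hS c hc).le
      · obtain ⟨j, -, rfl⟩ := Finset.mem_image.1 hc
        exact le_rfl
    · simp only [Finset.mem_union, Finset.mem_image, Finset.mem_range, Prod.mk.injEq]
      constructor
      · rintro (hj | ⟨j', hj', -, rfl⟩)
        · exact absurd (hS _ hj) (lt_irrefl i)
        · exact hj'
      · exact fun hj => Or.inr ⟨j, hj, by simp⟩

lemma IsTowerDiagram.filter_le_eq_union {T : Finset Cell} (ht : IsTowerDiagram T) (lo : ℕ) :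
    T.filter (fun c => lo ≤ c.1) =
      T.filter (fun c => lo + 1 ≤ c.1) ∪
        (Finset.range (colHeight T lo)).image fun j => (lo, j) := by
  ext ⟨i, j⟩
  simp only [Finset.mem_filter, Finset.mem_union, Finset.mem_image, Finset.mem_range,
    Prod.mk.injEq]
  constructor
  · rintro ⟨hij, hi⟩
    rcases hi.eq_or_lt with rfl | hlt
    · exact Or.inr ⟨j, ht.mem_iff_lt_colHeight.1 hij, rfl, rfl⟩
    · exact Or.inl ⟨hij, hlt⟩
  · rintro (⟨hij, hi⟩ | ⟨j', hj', rfl, rfl⟩)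
    · exact ⟨hij, by omega⟩
    · exact ⟨ht.mem_iff_lt_colHeight.2 hj', le_rfl⟩

lemma srDiagram_colsWord {T : Finset Cell} (ht : IsTowerDiagram T) {N : ℕ}
    (hN : ∀ c ∈ T, c.1 < N) (lo : ℕ) :
    SRDiagram (colsWord T lo N) (T.filter fun c => lo ≤ c.1) := by
  by_cases hlo : lo < N
  · rw [← colsWord_append (Nat.le_succ lo) hlo, colsWord_succ_self, ht.filter_le_eq_union lo]
    exact (srDiagram_colsWord ht hN (lo + 1)).append_range'
      (fun c hc => (Finset.mem_filter.1 hc).2) _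
  · rw [Finset.filter_eq_empty_iff.2 fun c hc => by have := hN c hc; omega, colsWord,
      Nat.sub_eq_zero_of_le (not_lt.1 hlo)]
    exact .nil
termination_by N - lo

section NaturalWord

variable {T T' : Finset Cell}

lemma srDiagram_naturalWord (ht : IsTowerDiagram T) : SRDiagram (naturalWord T) T := by
  have := srDiagram_colsWord ht (fun _ => lt_colBound) 0
  rwa [Finset.filter_true_of_mem fun c _ => Nat.zero_le c.1] at this

lemma isPosWord_naturalWord (ht : IsTowerDiagram T) : IsPosWord (naturalWord T) := by
  intro a ha
  obtain ⟨i, -, -, hia, hai⟩ := mem_colsWord.1 ha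
  exact ((ht _ (ht.mem_iff_lt_colHeight.2 (by omega : 0 < colHeight T i))).1).trans hia

lemma towerDiagramOf_towerPerm (ht : IsTowerDiagram T) : TowerDiagramOf (towerPerm T) T :=
  ⟨naturalWord T, (srDiagram_naturalWord ht).isReducedWord (isPosWord_naturalWord ht), rfl,
    srDiagram_naturalWord ht⟩

lemma TowerDiagramOf.towerPerm_eq {ω : Perm ℕ} (h : TowerDiagramOf ω T) :
    IsTowerDiagram T ∧ towerPerm T = ω := by
  obtain ⟨w, hred, rfl, hsr⟩ := h
  exact ⟨(hsr.towerPerm_eq hred.1).1, (hsr.towerPerm_eq hred.1).2.1⟩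

end NaturalWord

section Injective

variable {T T' : Finset Cell} {lo N : ℕ}

lemma colsPerm_eq_mul (hlo : lo < N) :
    colsPerm T lo N = colsPerm T (lo + 1) N * permOf (List.range' lo (colHeight T lo)) := by
  rw [colsPerm, ← colsWord_append (Nat.le_succ lo) hlo, colsWord_succ_self, permOf_append]
  rfl

lemma colsPerm_symm_apply (hlo : lo < N) :
    (colsPerm T lo N).symm lo = lo + colHeight T lo := by
  rw [Equiv.symm_apply_eq, colsPerm_eq_mul hlo, Perm.mul_apply, permOf_range'_apply_top,
    colsPerm_apply_of_lt (Nat.lt_succ_self lo)]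

lemma colHeight_eq_of_colsPerm_eq {lo : ℕ} (h : colsPerm T lo N = colsPerm T' lo N) {i : ℕ}
    (hlo : lo ≤ i) (hi : i < N) : colHeight T i = colHeight T' i := by
  have hloN : lo < N := by omega
  have h0 : colHeight T lo = colHeight T' lo := by
    have := congrArg (fun σ : Perm ℕ => σ.symm lo) h
    simp only [colsPerm_symm_apply hloN] at this
    omega
  rcases hlo.eq_or_lt with rfl | hlt
  · exact h0
  · rw [colsPerm_eq_mul hloN, colsPerm_eq_mul hloN, h0] at h
    exact colHeight_eq_of_colsPerm_eq (mul_right_cancel h) hlt hi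
termination_by N - lo

lemma towerPerm_injective (ht : IsTowerDiagram T) (ht' : IsTowerDiagram T')
    (h : towerPerm T = towerPerm T') : T = T' := by
  set N := max (colBound T) (colBound T')
  have hN : ∀ c ∈ T, c.1 < N := fun c hc => (lt_colBound hc).trans_le (le_max_left _ _)
  have hN' : ∀ c ∈ T', c.1 < N := fun c hc => (lt_colBound hc).trans_le (le_max_right _ _)
  have hcols : colsPerm T 0 N = colsPerm T' 0 N := by
    rw [colsPerm_eq_towerPerm hN, colsPerm_eq_towerPerm hN', h]
  refine ht.eq_of_colHeight_eq ht' fun i => ?_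
  rcases lt_or_ge i N with hi | hi
  · exact colHeight_eq_of_colsPerm_eq hcols (Nat.zero_le i) hi
  · rw [colHeight_eq_zero_of_le hN hi, colHeight_eq_zero_of_le hN' hi]

end Injective

lemma exists_towerPerm_eq_of_encard (n : ℕ) :
    ∀ σ : Perm ℕ, σ 0 = 0 → (inversions σ).encard = n →
      ∃ T, IsTowerDiagram T ∧ towerPerm T = σ := by
  induction n with
  | zero =>
    intro σ _ hσ
    refine ⟨∅, fun c hc => absurd hc (Finset.notMem_empty c), ?_⟩
    rw [towerPerm_empty, eq_one_of_inversions_eq_empty (Set.encard_eq_zero.1 hσ)]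
  | succ n ih =>
    intro σ h0 hσ
    obtain ⟨p, hp⟩ := Set.nonempty_of_encard_ne_zero (s := inversions σ) (by simp [hσ])
    obtain ⟨a, -, ha⟩ := exists_descent_of_mem_inversions hp
    have ha1 : 1 ≤ a := by
      rcases Nat.eq_zero_or_pos a with rfl | hpos
      · rw [h0] at ha
        exact absurd ha (Nat.not_lt_zero _)
      · exact hpos
    set τ := σ * swap a (a + 1)
    have hτ : τ a < τ (a + 1) := by simpa [τ] using ha
    have hτσ : τ * swap a (a + 1) = σ := by simp [τ, mul_assoc]
    have hinv : (inversions τ).encard = n := by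
      have := encard_inversions_mul_swap_of_lt hτ
      rw [hτσ, hσ, Nat.cast_add, Nat.cast_one] at this
      exact (WithTop.add_right_cancel ENat.one_ne_top this).symm
    have hτ0 : τ 0 = 0 := by
      have : swap a (a + 1) 0 = 0 := swap_apply_of_ne_of_ne (by omega) (by omega)
      rw [Perm.mul_apply, this, h0]
    obtain ⟨T', ht', hT'⟩ := ih τ hτ0 hinv
    obtain ⟨T, hT⟩ := exists_slides_of_lt ht' (by rwa [hT'])
    obtain ⟨ht, hperm, -⟩ := hT.towerPerm_eq ht' ha1
    exact ⟨T, ht, by rw [hperm, hT', hτσ]⟩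

lemma FinitePerm.exists_towerPerm_eq {ω : Perm ℕ} (hω : FinitePerm ω) :
    ∃ T, IsTowerDiagram T ∧ towerPerm T = ω := by
  obtain ⟨w, hw, rfl⟩ := hω
  obtain ⟨n, hn⟩ := ENat.ne_top_iff_exists.1
    ((encard_inversions_permOf_le w).trans_lt (ENat.natCast_lt_top _)).ne
  exact exists_towerPerm_eq_of_encard n _ (permOf_apply_of_lt hw Nat.zero_lt_one) hn.symm

/-- The map `ω ↦ T_ω` is a bijection between the set of all
finite permutations and the set of all tower diagrams. -/
theorem perm_towerDiagram_bijection :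
    (∀ ω : Equiv.Perm ℕ, FinitePerm ω → ∃ T, IsTowerDiagram T ∧ TowerDiagramOf ω T) ∧
      (∀ (ω : Equiv.Perm ℕ) (T T' : Finset Cell),
        TowerDiagramOf ω T → TowerDiagramOf ω T' → T = T') ∧
      (∀ (ω ω' : Equiv.Perm ℕ) (T : Finset Cell), FinitePerm ω → FinitePerm ω' →
        TowerDiagramOf ω T → TowerDiagramOf ω' T → ω = ω') ∧
      (∀ T : Finset Cell, IsTowerDiagram T →
        ∃ ω : Equiv.Perm ℕ, FinitePerm ω ∧ TowerDiagramOf ω T) := by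
  refine ⟨fun ω hω => ?_, fun ω T T' hT hT' => ?_, fun ω ω' T _ _ hω hω' => ?_,
    fun T ht => ?_⟩
  · obtain ⟨T, ht, rfl⟩ := hω.exists_towerPerm_eq
    exact ⟨T, ht, towerDiagramOf_towerPerm ht⟩
  · obtain ⟨ht, hperm⟩ := hT.towerPerm_eq
    obtain ⟨ht', hperm'⟩ := hT'.towerPerm_eq
    exact towerPerm_injective ht ht' (hperm.trans hperm'.symm)
  · rw [← hω.towerPerm_eq.2, ← hω'.towerPerm_eq.2]
  · exact ⟨towerPerm T, ⟨naturalWord T, isPosWord_naturalWord ht, rfl⟩,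
      towerDiagramOf_towerPerm ht⟩
end

section
/- Let ω ∈ Sₙ be a permutation, let T_ω be its tower diagram and D_ω its Rothe diagram. Then for each column index i, the number of cells in the i-th tower of T_ω equals the number of cells of D_ω in column i. In particular the nonempty columns of T_ω and D_ω coincide. -/
/-! Write `π = ω⁻¹`. The `i`-th column of the Rothe diagram of `ω` has `lehmerCode π i =
#{j > i | π j < π i}` cells, so it suffices to show that the tower diagram of a word `w` is the
diagram whose `i`-th tower has `lehmerCode (permOf w)⁻¹ i` cells. This goes letter by letter:
sliding `a` into that diagram passes exactly the columns `j < π⁻¹ a` with `π j > a`, the slid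
letter growing by one at each of them, and then adds a cell on top of tower `π⁻¹ a`. This is
exactly how the Lehmer code changes under `π ↦ sₐ π`, and the slide terminates without result
unless `π⁻¹ a < π⁻¹ (a + 1)`. -/

open Finset Equiv

noncomputable def lehmerCode (π : Perm ℕ) (i : ℕ) : ℕ :=
  {j | i < j ∧ π j < π i}.ncard

/-- The letter being slid when the slide of `b` into the Lehmer diagram of `π` reaches column
`k ≤ π⁻¹ b`. -/
def slideLevel (π : Perm ℕ) (b k : ℕ) : ℕ :=
  b + #{j ∈ range k | b < π j}

section LehmerCode

variable (π : Perm ℕ)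

theorem lehmerCode_eq_card (i : ℕ) :
    lehmerCode π i = #{v ∈ range (π i) | i < π.symm v} := by
  have h : {j | i < j ∧ π j < π i} = π.symm '' ↑{v ∈ range (π i) | i < π.symm v} := by
    ext j
    simp only [Set.mem_ofPred_eq, Set.mem_image, coe_filter, mem_range]
    exact ⟨fun ⟨hij, hj⟩ => ⟨π j, ⟨hj, by simpa using hij⟩, by simp⟩,
      fun ⟨v, ⟨hv, hiv⟩, hvj⟩ => by subst hvj; simpa using ⟨hiv, hv⟩⟩
  rw [lehmerCode, h, Set.ncard_image_of_injective _ π.symm.injective, Set.ncard_coe_finset]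

theorem lehmerCode_one (i : ℕ) : lehmerCode 1 i = 0 := by
  have : {j | i < j ∧ (1 : Perm ℕ) j < (1 : Perm ℕ) i} = ∅ :=
    Set.eq_empty_of_forall_notMem fun j hj => by
      simp only [Set.mem_ofPred_eq, Perm.one_apply] at hj
      omega
  rw [lehmerCode, this, Set.ncard_empty]

theorem card_filter_range_apply_mem (k : ℕ) (S : Finset ℕ) :
    #{j ∈ range k | π j ∈ S} = #{v ∈ S | π.symm v < k} :=
  card_nbij' π π.symm (fun j => by simp +contextual) (fun v => by simp +contextual)
    (fun j _ => by simp) (fun v _ => by simp)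

theorem add_lehmerCode_eq_slideLevel (i : ℕ) :
    i + lehmerCode π i = slideLevel π (π i) i := by
  have hpos : #{j ∈ range i | ¬ π i < π j} = #{v ∈ range (π i) | π.symm v < i} := by
    rw [← card_filter_range_apply_mem]
    refine congrArg card (filter_congr fun j hj => ?_)
    have : π j ≠ π i := π.injective.ne (by simp at hj; omega)
    simp only [mem_range]
    omega
  have hval : #{v ∈ range (π i) | ¬ i < π.symm v} = #{v ∈ range (π i) | π.symm v < i} := by
    refine congrArg card (filter_congr fun v hv => ?_)
    have : π.symm v ≠ i := fun h => by simp [← h] at hv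
    omega
  have hi := card_filter_add_card_filter_not (s := range i) (fun j => π i < π j)
  have hπi := card_filter_add_card_filter_not (s := range (π i)) (fun v => i < π.symm v)
  rw [card_range] at hi hπi
  rw [lehmerCode_eq_card, slideLevel]
  omega

theorem slideLevel_eq_add_card {b b' : ℕ} (hb : b ≤ b') (k : ℕ) :
    slideLevel π b' k = slideLevel π b k + #{v ∈ Ioc b b' | k ≤ π.symm v} := by
  have hsplit := card_filter_add_card_filter_not (s := {j ∈ range k | b < π j}) (fun j => b' < π j)
  have hhigh : {j ∈ {j ∈ range k | b < π j} | b' < π j} = {j ∈ range k | b' < π j} := by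
    rw [filter_filter]
    exact filter_congr fun j _ => by omega
  have hmid : {j ∈ {j ∈ range k | b < π j} | ¬ b' < π j} = {j ∈ range k | π j ∈ Ioc b b'} := by
    rw [filter_filter]
    exact filter_congr fun j _ => by simp only [mem_Ioc]; omega
  have hIoc := card_filter_add_card_filter_not (s := Ioc b b') (fun v => π.symm v < k)
  rw [Nat.card_Ioc] at hIoc
  rw [hhigh, hmid, card_filter_range_apply_mem] at hsplit
  simp only [not_lt] at hIoc
  rw [slideLevel, slideLevel]
  omega

theorem slideLevel_lt_slideLevel {b b' k : ℕ} (hb : b < b') (hk : k ≤ π.symm b') :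
    slideLevel π b k < slideLevel π b' k := by
  have : 0 < #{v ∈ Ioc b b' | k ≤ π.symm v} :=
    card_pos.mpr ⟨b', by simp [hb, hk]⟩
  rw [slideLevel_eq_add_card π hb.le]
  omega

theorem slideLevel_lt_add_lehmerCode {b k : ℕ} (h : b < π k) :
    slideLevel π b k < k + lehmerCode π k := by
  rw [add_lehmerCode_eq_slideLevel]
  exact slideLevel_lt_slideLevel π h (by simp)

theorem add_lehmerCode_lt_slideLevel {b k : ℕ} (h : π k < b) (hk : k ≤ π.symm b) :
    k + lehmerCode π k < slideLevel π b k := by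
  rw [add_lehmerCode_eq_slideLevel]
  exact slideLevel_lt_slideLevel π h hk

theorem add_lehmerCode_eq_slideLevel_add_one {b k : ℕ} (h : π k = b + 1) :
    k + lehmerCode π k = slideLevel π b k + 1 := by
  have : {v ∈ Ioc b (b + 1) | k ≤ π.symm v} = {b + 1} := by
    ext v
    simp only [mem_filter, mem_Ioc, mem_singleton]
    constructor
    · rintro ⟨⟨h1, h2⟩, -⟩
      omega
    · rintro rfl
      simp only [← h, Equiv.symm_apply_apply, le_refl, and_true]
      omega
  rw [add_lehmerCode_eq_slideLevel, h, slideLevel_eq_add_card π (Nat.le_succ b), this,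
    card_singleton]

theorem slideLevel_succ_of_lt {b k : ℕ} (h : b < π k) :
    slideLevel π b (k + 1) = slideLevel π b k + 1 := by
  simp [slideLevel, range_add_one, filter_insert, h, add_assoc]

theorem slideLevel_succ_of_le {b k : ℕ} (h : π k ≤ b) :
    slideLevel π b (k + 1) = slideLevel π b k := by
  simp [slideLevel, range_add_one, filter_insert, h.not_gt]

theorem swap_lt_swap_iff {a x y : ℕ} (h : ¬(x = a ∧ y = a + 1)) (h' : ¬(x = a + 1 ∧ y = a)) :
    swap a (a + 1) x < swap a (a + 1) y ↔ x < y := by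
  simp only [swap_apply_def]
  split_ifs <;> omega

theorem lehmerCode_swap_mul {a : ℕ} (hPQ : π.symm a < π.symm (a + 1)) (i : ℕ) :
    lehmerCode (swap a (a + 1) * π) i = lehmerCode π i + if i = π.symm a then 1 else 0 := by
  split_ifs with hi
  · subst hi
    have hfin : {j | π.symm a < j ∧ π j < π (π.symm a)}.Finite :=
      ((Set.finite_Iio _).preimage π.injective.injOn).subset fun j hj => hj.2
    have hset : {j | π.symm a < j ∧ (swap a (a + 1) * π) j < (swap a (a + 1) * π) (π.symm a)} =
        insert (π.symm (a + 1)) {j | π.symm a < j ∧ π j < π (π.symm a)} := by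
      ext j
      have hP : π j = a ↔ j = π.symm a := π.eq_symm_apply.symm
      have hQ : π j = a + 1 ↔ j = π.symm (a + 1) := π.eq_symm_apply.symm
      simp only [Set.mem_ofPred_eq, Set.mem_insert_iff, Perm.mul_apply, Equiv.apply_symm_apply,
        swap_apply_left, swap_apply_def]
      split_ifs <;> omega
    rw [lehmerCode, lehmerCode, hset, Set.ncard_insert_of_notMem (by simp) hfin]
  · rw [add_zero, lehmerCode, lehmerCode]
    congr 1
    ext j
    refine and_congr_right fun hij => swap_lt_swap_iff ?_ ?_
    · rintro ⟨hj, hi⟩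
      rw [← π.eq_symm_apply] at hj hi
      omega
    · rintro ⟨-, hi'⟩
      exact hi (π.eq_symm_apply.2 hi')

end LehmerCode

def IsLehmerDiagram (π : Perm ℕ) (T : Finset Cell) : Prop :=
  ∀ x : Cell, x ∈ T ↔ x.2 < lehmerCode π x.1

theorem IsLehmerDiagram.mk_sub_mem_iff {π : Perm ℕ} {T : Finset Cell} (hT : IsLehmerDiagram π T)
    {k d : ℕ} (hk : k ≤ d) : (k, d - k) ∈ T ↔ d < k + lehmerCode π k := by
  rw [hT]
  dsimp only
  omega

theorem IsLehmerDiagram.insert_swap_mul {π : Perm ℕ} {T : Finset Cell} (hT : IsLehmerDiagram π T)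
    {a : ℕ} (hPQ : π.symm a < π.symm (a + 1)) :
    IsLehmerDiagram (swap a (a + 1) * π) (insert (π.symm a, lehmerCode π (π.symm a)) T) := by
  rintro ⟨i, j⟩
  rw [mem_insert, hT, lehmerCode_swap_mul π hPQ, Prod.mk.injEq]
  split_ifs with h
  · subst h
    dsimp only
    omega
  · simp [h]

theorem IsLehmerDiagram.card_filter_fst_eq {π : Perm ℕ} {T : Finset Cell}
    (hT : IsLehmerDiagram π T) (i : ℕ) : #{c ∈ T | c.1 = i} = lehmerCode π i := by
  have : {c ∈ T | c.1 = i} = (range (lehmerCode π i)).image (Prod.mk i) := by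
    ext ⟨k, j⟩
    rw [mem_filter, hT]
    simp only [mem_image, mem_range, Prod.mk.injEq]
    constructor
    · rintro ⟨hj, rfl⟩
      exact ⟨j, hj, rfl, rfl⟩
    · rintro ⟨j, hj, rfl, rfl⟩
      exact ⟨hj, rfl⟩
  rw [this, card_image_of_injective _ (Prod.mk_right_injective i), card_range]

/-- Column `i` is where the slide of `α` into the towers of `T` in columns `≥ lo` acts: it is the
leftmost of these towers meeting the diagonal `x + y = α - 1`, or `i = α` if there is none. -/
def IsVisitedColumn (T : Finset Cell) (lo α i : ℕ) : Prop :=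
  lo ≤ i ∧ i ≤ α ∧ (i < α → (i, α - 1 - i) ∈ T) ∧ ∀ k, lo ≤ k → k < i → (k, α - 1 - k) ∉ T

theorem SlideAux.induction_on_visit {T : Finset Cell} {motive : ℕ → ℕ → Finset Cell → Prop}
    (add : ∀ lo α i, IsVisitedColumn T lo α i → (i, α - i) ∉ T →
      motive lo α (insert (i, α - i) T))
    (cont : ∀ lo α i T', IsVisitedColumn T lo α i → (i, α - i + 1) ∈ T →
      motive (i + 1) (α + 1) T' → motive lo α T')
    {lo α : ℕ} {T' : Finset Cell} (h : SlideAux T lo α T') (hlo : lo ≤ α) : motive lo α T' := by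
  induction h with
  | s1a lo α h1 h2 =>
    have hvis : IsVisitedColumn T lo α α :=
      ⟨hlo, le_rfl, by omega, fun k hk hkα hmem => h1 _ hmem hk (by simp only; omega)⟩
    simpa using add lo α α hvis (by simpa using fun hmem => h2 _ hmem hlo rfl)
  | s1c lo α T' h1 h2 h2' h3 hrec ih =>
    have hvis : IsVisitedColumn T lo α α :=
      ⟨hlo, le_rfl, by omega, fun k hk hkα hmem => h1 _ hmem hk (by simp only; omega)⟩
    exact cont lo α α T' hvis (by simpa using h3) (ih (by omega))
  | s2a lo α i j hmem hlo' hdiag hmin htop =>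
    subst hdiag
    have hvis : IsVisitedColumn T lo (i + j + 1) i :=
      ⟨hlo', by omega, fun _ => by simpa using hmem,
        fun k hk hki hmem => by have := hmin _ hmem hk (by simp only; omega); omega⟩
    have hsub : i + j + 1 - i = j + 1 := by omega
    simpa [hsub] using add lo _ i hvis (by rwa [hsub])
  | s2c lo α i j T' hmem hlo' hdiag hmin h1 h2 hrec ih =>
    subst hdiag
    have hvis : IsVisitedColumn T lo (i + j + 1) i :=
      ⟨hlo', by omega, fun _ => by simpa using hmem,
        fun k hk hki hmem => by have := hmin _ hmem hk (by simp only; omega); omega⟩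
    exact cont lo _ i T' hvis (by rwa [show i + j + 1 - i + 1 = j + 2 by omega]) (ih (by omega))

namespace IsVisitedColumn

variable {π : Perm ℕ} {T : Finset Cell} {a lo α i : ℕ}

theorem apply_le_of_slideLevel_eq (hT : IsLehmerDiagram π T) (hvis : IsVisitedColumn T lo α i)
    {k : ℕ} (hk : lo ≤ k) (hki : k < i) (hlev : slideLevel π a k = α) : π k ≤ a := by
  by_contra! h
  have := slideLevel_lt_add_lehmerCode π h
  exact hvis.2.2.2 k hk hki ((hT.mk_sub_mem_iff (by have := hvis.2.1; omega)).2 (by omega))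

theorem slideLevel_eq (hT : IsLehmerDiagram π T) (hvis : IsVisitedColumn T lo α i)
    (hα : slideLevel π a lo = α) {k : ℕ} (hk : lo ≤ k) (hki : k ≤ i) : slideLevel π a k = α := by
  induction k, hk using Nat.le_induction with
  | base => exact hα
  | succ k hk ih =>
    rw [slideLevel_succ_of_le π (hvis.apply_le_of_slideLevel_eq hT hk (by omega) (ih (by omega)))]
    exact ih (by omega)

theorem apply_le (hT : IsLehmerDiagram π T) (hvis : IsVisitedColumn T lo α i)
    (hα : slideLevel π a lo = α) {k : ℕ} (hk : lo ≤ k) (hki : k < i) : π k ≤ a :=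
  hvis.apply_le_of_slideLevel_eq hT hk hki (hvis.slideLevel_eq hT hα hk hki.le)

theorem le_symm (hT : IsLehmerDiagram π T) (hvis : IsVisitedColumn T lo α i)
    (hα : slideLevel π a lo = α) (hP : lo ≤ π.symm a) : i ≤ π.symm a := by
  by_contra! h
  have hlev := hvis.slideLevel_eq hT hα hP h.le
  have hreach := add_lehmerCode_eq_slideLevel π (π.symm a)
  rw [Equiv.apply_symm_apply] at hreach
  have := hvis.2.1
  exact hvis.2.2.2 _ hP h ((hT.mk_sub_mem_iff (d := α - 1) (by omega)).2 (by omega))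

theorem le_apply (hT : IsLehmerDiagram π T) (hvis : IsVisitedColumn T lo α i)
    (hα : slideLevel π a lo = α) (hP : lo ≤ π.symm a) : a ≤ π i := by
  by_contra! h
  have hreach := add_lehmerCode_lt_slideLevel π h (hvis.le_symm hT hα hP)
  rw [hvis.slideLevel_eq hT hα hvis.1 le_rfl] at hreach
  have hdiag : i < α → α - 1 < i + lehmerCode π i :=
    fun hiα => (hT.mk_sub_mem_iff (by omega)).1 (hvis.2.2.1 hiα)
  have := hvis.2.1
  omega

theorem eq_symm_of_notMem (hT : IsLehmerDiagram π T) (hvis : IsVisitedColumn T lo α i)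
    (hα : slideLevel π a lo = α) (hP : lo ≤ π.symm a) (hQ : lo ≤ π.symm (a + 1))
    (hnot : (i, α - i) ∉ T) :
    i = π.symm a ∧ α - i = lehmerCode π i ∧ π.symm a < π.symm (a + 1) := by
  have hlev := hvis.slideLevel_eq hT hα hvis.1 le_rfl
  have hreach := add_lehmerCode_eq_slideLevel π i
  have hπi : π i = a := by
    refine (hvis.le_apply hT hα hP).antisymm' (not_lt.1 fun h => hnot ?_)
    have := slideLevel_lt_add_lehmerCode π h
    exact (hT.mk_sub_mem_iff hvis.2.1).2 (by omega)
  have hi : i = π.symm a := by rw [← hπi, Equiv.symm_apply_apply]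
  refine ⟨hi, by rw [hπi] at hreach; omega, ?_⟩
  by_contra! h
  have hne : π.symm (a + 1) ≠ π.symm a := π.symm.injective.ne (by omega)
  have := hvis.apply_le hT hα hQ (by omega : π.symm (a + 1) < i)
  rw [Equiv.apply_symm_apply] at this
  omega

theorem succ_of_mem (hT : IsLehmerDiagram π T) (hvis : IsVisitedColumn T lo α i)
    (hα : slideLevel π a lo = α) (hP : lo ≤ π.symm a) (hQ : lo ≤ π.symm (a + 1))
    (hmem : (i, α - i + 1) ∈ T) :
    i + 1 ≤ π.symm a ∧ i + 1 ≤ π.symm (a + 1) ∧ slideLevel π a (i + 1) = α + 1 := by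
  have hlev := hvis.slideLevel_eq hT hα hvis.1 le_rfl
  have hiα := hvis.2.1
  have hreach : α + 1 < i + lehmerCode π i :=
    (hT.mk_sub_mem_iff (by omega)).1 (by rwa [show α + 1 - i = α - i + 1 by omega])
  have ha : a < π i := (hvis.le_apply hT hα hP).lt_of_ne fun h => by
    have := add_lehmerCode_eq_slideLevel π i
    rw [← h] at this
    omega
  have ha1 : π i ≠ a + 1 := fun h => by
    have := add_lehmerCode_eq_slideLevel_add_one π h
    omega
  have hiP : i ≠ π.symm a := by rintro rfl; simp at ha
  have hiQ : i ≠ π.symm (a + 1) := by rintro rfl; simp at ha1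
  refine ⟨by have := hvis.le_symm hT hα hP; omega, ?_, by rw [slideLevel_succ_of_lt π ha, hlev]⟩
  by_contra! h
  have := hvis.apply_le hT hα hQ (by omega : π.symm (a + 1) < i)
  rw [Equiv.apply_symm_apply] at this
  omega

end IsVisitedColumn

theorem IsLehmerDiagram.slides {π : Perm ℕ} {T T' : Finset Cell} (hT : IsLehmerDiagram π T)
    {a : ℕ} (h : Slides T a T') :
    π.symm a < π.symm (a + 1) ∧ T' = insert (π.symm a, lehmerCode π (π.symm a)) T := by
  refine SlideAux.induction_on_visit (motive := fun lo α T' => lo ≤ π.symm a →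
      lo ≤ π.symm (a + 1) → slideLevel π a lo = α →
      π.symm a < π.symm (a + 1) ∧ T' = insert (π.symm a, lehmerCode π (π.symm a)) T)
    ?_ ?_ h (Nat.zero_le a) (Nat.zero_le _) (Nat.zero_le _) (by simp [slideLevel])
  · intro lo α i hvis hnot hP hQ hα
    obtain ⟨rfl, hcode, hPQ⟩ := hvis.eq_symm_of_notMem hT hα hP hQ hnot
    exact ⟨hPQ, by rw [hcode]⟩
  · intro lo α i T' hvis hmem ih hP hQ hα
    obtain ⟨hP', hQ', hα'⟩ := hvis.succ_of_mem hT hα hP hQ hmem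
    exact ih hP' hQ' hα'

theorem permOf_append_singleton (w : List ℕ) (a : ℕ) :
    permOf (w ++ [a]) = permOf w * swap a (a + 1) := by
  simp [permOf]

theorem permOf_apply_zero {w : List ℕ} (hw : IsPosWord w) : permOf w 0 = 0 := by
  induction w with
  | nil => rfl
  | cons x t ih =>
    simp only [permOf, List.map_cons, List.prod_cons, Perm.mul_apply] at ih ⊢
    rw [ih fun b hb => hw b (List.mem_cons_of_mem x hb)]
    have := hw x List.mem_cons_self
    exact swap_apply_of_ne_of_ne (by omega) (by omega)

theorem SRDiagram.isLehmerDiagram {w : List ℕ} {T : Finset Cell} (h : SRDiagram w T) :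
    IsLehmerDiagram (permOf w).symm T := by
  induction h with
  | nil =>
    intro x
    simp [permOf, ← Perm.inv_def, lehmerCode_one]
  | snoc hw ha ih =>
    obtain ⟨hPQ, rfl⟩ := ih.slides ha
    rw [permOf_append_singleton, ← Perm.inv_def, mul_inv_rev, swap_inv, Perm.inv_def]
    exact ih.insert_swap_mul hPQ

theorem ncard_rotheDiagram_column {ω : Perm ℕ} (hω : ω 0 = 0) (i : ℕ) :
    {r : ℕ | (r, i) ∈ RotheDiagram ω}.ncard = lehmerCode ω.symm i := by
  rw [lehmerCode_eq_card, Equiv.symm_symm, ← Set.ncard_coe_finset]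
  congr 1
  ext r
  simp only [RotheDiagram, Set.mem_ofPred_eq, coe_filter, mem_range]
  refine ⟨fun h => ⟨h.2.2.2, h.2.2.1⟩, fun ⟨hr, hi⟩ => ⟨?_, ?_, hi, hr⟩⟩
  · refine Nat.one_le_iff_ne_zero.2 fun h0 => ?_
    simp [h0, hω] at hi
  · refine Nat.one_le_iff_ne_zero.2 fun h0 => ?_
    simp [h0, ω.symm_apply_eq.2 hω.symm] at hr

/-- For every column index `i`, the size of the `i`-th tower
of the tower diagram of `ω` equals the number of cells of the Rothe diagram of
`ω` in column `i`. -/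
theorem tower_column_eq_rothe_column
    (ω : Equiv.Perm ℕ) (T : Finset Cell)
    (hT : ∃ w : List ℕ, IsReducedWord w ∧ permOf w = ω ∧ SRDiagram w T) :
    ∀ i : ℕ, (T.filter fun c => c.1 = i).card =
      Set.ncard {r : ℕ | (r, i) ∈ RotheDiagram ω} := by
  obtain ⟨w, hred, rfl, hT⟩ := hT
  intro i
  rw [hT.isLehmerDiagram.card_filter_fst_eq, ncard_rotheDiagram_column (permOf_apply_zero hred.1)]
end
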